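/- arXiv:cs/0107022 — 2 statements merged into one kernel-verified Lean document; each statement's English description precedes it below -/
import Mathlib

section
/- Let L be a first-order language with no relation symbols, and let t and s be terms whose sets of variables X = Var(t) and Y = Var(s) are disjoint. Suppose θ is a most general unifier of t and s. Then for all substitutions ρ and ρ' such that t.subst ρ = s.subst ρ', there exists a substitution φ such that ρ x = (θ x).subst φ for every x ∈ X and ρ' y = (θ y).subst φ for every y ∈ Y. (That is, the restrictions of an mgu to the two disjoint variable sets form a pullback cone over the pair of substitutions determined by t and s.) -/
open FirstOrder FirstOrder.Language

lemma subst_congr_varFinset {L : FirstOrder.Language} {V : Type*} [DecidableEq V]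
    (t : L.Term V) (σ τ : V → L.Term V)
    (h : ∀ x ∈ t.varFinset, σ x = τ x) : t.subst σ = t.subst τ := by
  induction t with
  | var x => exact h x (by simp [Term.varFinset])
  | func f ts ih =>
    simp only [Term.subst]
    congr 1
    funext i
    exact ih i fun x hx => h x (by
      simp only [Term.varFinset, Finset.mem_biUnion, Finset.mem_univ]
      exact ⟨i, trivial, hx⟩)

/-- Let `t` and `s` be terms with disjoint sets of variables, and let `θ` be a
most general unifier of `t` and `s`.  Then for all substitutions `ρ`, `ρ'`
with `t.subst ρ = s.subst ρ'` there is a substitution `φ` with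
`ρ x = (θ x).subst φ` on the variables of `t` and `ρ' y = (θ y).subst φ` on
the variables of `s`: the restrictions of the mgu to the two disjoint variable
sets form a pullback cone. -/
theorem mgu_restrictions_pullback
    {L : FirstOrder.Language} (hrel : ∀ n, IsEmpty (L.Relations n))
    {V : Type*} [DecidableEq V] (t s : L.Term V)
    (hdisj : Disjoint t.varFinset s.varFinset)
    (θ : V → L.Term V)
    (hθ : t.subst θ = s.subst θ)
    (hmgu : ∀ η : V → L.Term V, t.subst η = s.subst η →
      ∃ δ : V → L.Term V, ∀ x : V, η x = (θ x).subst δ)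
    (ρ ρ' : V → L.Term V)
    (h : t.subst ρ = s.subst ρ') :
    ∃ φ : V → L.Term V,
      (∀ x ∈ t.varFinset, ρ x = (θ x).subst φ) ∧
      (∀ y ∈ s.varFinset, ρ' y = (θ y).subst φ) := by
  classical
  set η : V → L.Term V := fun x => if x ∈ t.varFinset then ρ x else ρ' x with hη
  have ht : t.subst η = t.subst ρ :=
    subst_congr_varFinset t _ _ fun x hx => by simp [hη, hx]
  have hs : s.subst η = s.subst ρ' :=
    subst_congr_varFinset s _ _ fun x hx => by
      have : x ∉ t.varFinset := fun hxt => (Finset.disjoint_left.mp hdisj hxt) hx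
      simp [hη, this]
  obtain ⟨δ, hδ⟩ := hmgu η (by rw [ht, hs, h])
  refine ⟨δ, fun x hx => ?_, fun y hy => ?_⟩
  · rw [← hδ x]; simp [hη, hx]
  · rw [← hδ y]
    have : y ∉ t.varFinset := fun hyt => (Finset.disjoint_left.mp hdisj hyt) hy
    simp [hη, this]
end

section
/- There exist a definite logic program P and goals that have the same ground refutations but different sets of computed answer substitutions; concretely, over a language with a constant a, a variable x, and distinct unary predicate symbols p and q, let P consist of the three facts p(x), p(a), and q(x). Then: (i) for every ground substitution σ, the ground goal σ;p(x) has a refutation from P using ground instances of clauses if and only if σ;q(x) does (indeed both always do); but (ii) the set of computed answer substitutions of the goal p(x) under SLD-resolution is {ε, [a/x]} while that of q(x) is {ε} (where ε is the empty substitution), so the two sets differ. Hence the equivalence by computed answer substitutions is strictly finer than the equivalence by ground refutations. -/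
open FirstOrder FirstOrder.Language

/-- An atomic formula: a predicate symbol applied to terms over the
variables `ℕ`. -/
structure LPAtom (L : FirstOrder.Language) where
  arity : ℕ
  pred : L.Relations arity
  args : Fin arity → L.Term ℕ

variable {L : FirstOrder.Language}

/-- Applying a substitution to an atom. -/
def asubst (A : LPAtom L) (σ : ℕ → L.Term ℕ) : LPAtom L :=
  ⟨A.arity, A.pred, fun i => (A.args i).subst σ⟩

/-- The variables occurring in an atom. -/
def avars (A : LPAtom L) : Finset ℕ :=
  Finset.univ.biUnion fun i : Fin A.arity => (A.args i).varFinset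

/-- A goal is a finite list of atoms. -/
abbrev LPGoal (L : FirstOrder.Language) := List (LPAtom L)

/-- Applying a substitution to a goal. -/
def gsubst (G : LPGoal L) (σ : ℕ → L.Term ℕ) : LPGoal L :=
  G.map fun A => asubst A σ

/-- The variables occurring in a goal. -/
def gvars (G : LPGoal L) : Finset ℕ :=
  G.foldr (fun A s => avars A ∪ s) ∅

/-- A goal is ground if no variables occur in it. -/
def gGround (G : LPGoal L) : Prop := ∀ A ∈ G, avars A = ∅

/-- A definite Horn clause `head :- body`. -/
structure LPClause (L : FirstOrder.Language) where
  head : LPAtom L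
  body : LPGoal L

/-- The variables occurring in a clause. -/
def cvars (c : LPClause L) : Finset ℕ := avars c.head ∪ gvars c.body

/-- Applying a substitution to a clause. -/
def csubst (c : LPClause L) (σ : ℕ → L.Term ℕ) : LPClause L :=
  ⟨asubst c.head σ, gsubst c.body σ⟩

/-- A definite logic program: a finite collection (list) of clauses. -/
abbrev LPProgram (L : FirstOrder.Language) := List (LPClause L)

/-- The substitution induced by a variable renaming `ρ`. -/
def renSubst (ρ : ℕ → ℕ) : ℕ → L.Term ℕ := fun v => Term.var (ρ v)

/-- `ρ` renames the variables of the clause `c` apart from the goal `G`. -/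
def RenamesApart (ρ : ℕ → ℕ) (c : LPClause L) (G : LPGoal L) : Prop :=
  Function.Injective ρ ∧ ∀ v ∈ cvars c, ρ v ∉ gvars G

/-- `θ` is a most general unifier of the atoms `A` and `B`. -/
def IsMguAtom (A B : LPAtom L) (θ : ℕ → L.Term ℕ) : Prop :=
  asubst A θ = asubst B θ ∧
    ∀ η : ℕ → L.Term ℕ, asubst A η = asubst B η →
      ∃ δ : ℕ → L.Term ℕ, ∀ v : ℕ, η v = (θ v).subst δ

/-- Ground refutation (semantics (1)): the goal must be ground, and a
resolution step replaces a selected atom by the body of a ground instance of a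
program clause whose head equals the selected atom. -/
inductive GroundRef (P : LPProgram L) : LPGoal L → Prop
  | nil : GroundRef P []
  | step {G₁ G₂ : LPGoal L} {c : LPClause L} {σ : ℕ → L.Term ℕ}
      (hc : c ∈ P)
      (hclause : gGround (asubst c.head σ :: gsubst c.body σ))
      (hgoal : gGround (G₁ ++ asubst c.head σ :: G₂))
      (hrest : GroundRef P (G₁ ++ gsubst c.body σ ++ G₂)) :
      GroundRef P (G₁ ++ asubst c.head σ :: G₂)

/-- Refutation with arbitrary common instances (semantics (2)): a resolution
step applies any substitution `σ` with `σ;A = σ;ρ;H` for a renamed-apart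
clause `H :- B` of the program, and records `σ`; the recorded answer of a
refutation is the composition of the step substitutions. -/
inductive Ref2 (P : LPProgram L) : LPGoal L → (ℕ → L.Term ℕ) → Prop
  | nil : Ref2 P [] Term.var
  | step {G₁ G₂ : LPGoal L} {A : LPAtom L} {c : LPClause L} {ρ : ℕ → ℕ}
      {σ θ : ℕ → L.Term ℕ}
      (hc : c ∈ P)
      (hρ : RenamesApart ρ c (G₁ ++ A :: G₂))
      (hinst : asubst A σ = asubst (asubst c.head (renSubst ρ)) σ)
      (hrest : Ref2 P (gsubst (G₁ ++ gsubst c.body (renSubst ρ) ++ G₂) σ) θ) :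
      Ref2 P (G₁ ++ A :: G₂) (fun v => (σ v).subst θ)

/-- SLD-refutation (semantics (3)): a resolution step uses a most general
unifier `θ` of the selected atom and the head of a renamed-apart program
clause; the computed answer of a refutation is the composition of the step
mgus. -/
inductive SLD (P : LPProgram L) : LPGoal L → (ℕ → L.Term ℕ) → Prop
  | nil : SLD P [] Term.var
  | step {G₁ G₂ : LPGoal L} {A : LPAtom L} {c : LPClause L} {ρ : ℕ → ℕ}
      {θ θ' : ℕ → L.Term ℕ}
      (hc : c ∈ P)
      (hρ : RenamesApart ρ c (G₁ ++ A :: G₂))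
      (hmgu : IsMguAtom A (asubst c.head (renSubst ρ)) θ)
      (hrest : SLD P (gsubst (G₁ ++ gsubst c.body (renSubst ρ) ++ G₂) θ) θ') :
      SLD P (G₁ ++ A :: G₂) (fun v => (θ v).subst θ')

/-- The function symbols occurring in a term. -/
def tfuncs : L.Term ℕ → Set (Σ n, L.Functions n)
  | Term.var _ => ∅
  | Term.func f ts => insert ⟨_, f⟩ (⋃ i, tfuncs (ts i))

/-- The function symbols occurring in an atom. -/
def afuncs (A : LPAtom L) : Set (Σ n, L.Functions n) :=
  ⋃ i : Fin A.arity, tfuncs (A.args i)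

/-- The function symbols occurring in a clause. -/
def cfuncs (c : LPClause L) : Set (Σ n, L.Functions n) :=
  afuncs c.head ∪ ⋃ A ∈ c.body, afuncs A

/-- A language with a single constant symbol `a` and two distinct unary
predicate symbols `p` (encoded `true`) and `q` (encoded `false`). -/
def L13 : FirstOrder.Language where
  Functions := fun n => match n with | 0 => Unit | _ => Empty
  Relations := fun n => match n with | 1 => Bool | _ => Empty

/-- The constant symbol `a`. -/
def aSym : L13.Functions 0 := ()

/-- The ground term `a`. -/
def aT : L13.Term ℕ := Term.func aSym Fin.elim0

/-- The atom `p(t)`. -/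
def pAtom (t : L13.Term ℕ) : LPAtom L13 :=
  ⟨1, (true : L13.Relations 1), fun _ => t⟩

/-- The atom `q(t)`. -/
def qAtom (t : L13.Term ℕ) : LPAtom L13 :=
  ⟨1, (false : L13.Relations 1), fun _ => t⟩

/-- The program consisting of the three facts `p(x)`, `p(a)`, `q(x)`,
where `x` is the variable `0`. -/
def P13 : LPProgram L13 :=
  [⟨pAtom (Term.var 0), []⟩, ⟨pAtom aT, []⟩, ⟨qAtom (Term.var 0), []⟩]

/-! Every fact of `P13` has a ground instance at every ground term, so each ground instance of
`p(x)` and of `q(x)` is refuted in a single step. SLD-resolution records most general unifiers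
instead: resolving `p(x)` against the fact `p(a)` binds `x` to `a`, whereas `q(x)` only unifies
with a renamed copy `q(x')`, and an mgu of two atoms that are also unified by a variable
renaming can only map variables to variables. -/

namespace FirstOrder.Language.Term

variable {α β : Type*}

theorem subst_eq_self [DecidableEq α] {t : L.Term α} {σ : α → L.Term α}
    (h : ∀ v ∈ t.varFinset, σ v = var v) : t.subst σ = t := by
  induction t with
  | var v => exact h v (by simp [varFinset])
  | func f ts ih =>
    simp only [subst]
    congr 1
    funext i
    exact ih i fun v hv => h v (Finset.mem_biUnion.2 ⟨i, Finset.mem_univ i, hv⟩)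

theorem subst_var_eq_self (t : L.Term α) : t.subst var = t := by
  classical
  exact subst_eq_self fun _ _ => rfl

theorem exists_eq_var_of_subst_eq_var {t : L.Term α} {σ : α → L.Term β} {y : β}
    (h : t.subst σ = var y) : ∃ x, t = var x := by
  cases t with
  | var x => exact ⟨x, rfl⟩
  | func f ts => cases h

theorem varFinset_subst_eq_empty [DecidableEq β] {σ : α → L.Term β}
    (hσ : ∀ v, (σ v).varFinset = ∅) (t : L.Term α) : (t.subst σ).varFinset = ∅ := by
  induction t with
  | var v => exact hσ v
  | func f ts ih => simp [subst, varFinset, Finset.eq_empty_iff_forall_notMem, ih]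

end FirstOrder.Language.Term

open Term

theorem LPAtom.mk_unary_inj {R R' : L.Relations 1} {s t : L.Term ℕ} :
    (⟨1, R, fun _ => s⟩ : LPAtom L) = ⟨1, R', fun _ => t⟩ ↔ R = R' ∧ s = t := by
  constructor
  · intro h
    injection h with _ hR hargs
    exact ⟨hR, congrFun hargs 0⟩
  · rintro ⟨rfl, rfl⟩
    rfl

theorem avars_asubst_eq_empty {σ : ℕ → L.Term ℕ} (hσ : ∀ v, (σ v).varFinset = ∅)
    (A : LPAtom L) : avars (asubst A σ) = ∅ := by
  simp [avars, asubst, Finset.eq_empty_iff_forall_notMem, varFinset_subst_eq_empty hσ]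

theorem renamesApart_succ {c : LPClause L} {G : LPGoal L} (hG : gvars G ⊆ {0}) :
    RenamesApart Nat.succ c G :=
  ⟨Nat.succ_injective, fun v _ hv => Nat.succ_ne_zero v (Finset.mem_singleton.1 (hG hv))⟩

theorem isMguAtom_unary_var {R : L.Relations 1} {x : ℕ} {t : L.Term ℕ}
    (hx : x ∉ t.varFinset) :
    IsMguAtom ⟨1, R, fun _ => var x⟩ ⟨1, R, fun _ => t⟩ (Function.update var x t) := by
  have ht : t.subst (Function.update var x t) = t :=
    subst_eq_self fun v hv => Function.update_of_ne (ne_of_mem_of_not_mem hv hx) _ _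
  refine ⟨LPAtom.mk_unary_inj.2 ⟨rfl, (Function.update_self x t var).trans ht.symm⟩,
    fun η hη => ⟨η, fun v => ?_⟩⟩
  have hηx : η x = t.subst η := (LPAtom.mk_unary_inj.1 hη).2
  by_cases hv : v = x
  · subst hv
    simpa using hηx
  · simp [hv, subst]

theorem IsMguAtom.exists_eq_var {A B : LPAtom L} {θ : ℕ → L.Term ℕ} (hθ : IsMguAtom A B θ)
    {ρ : ℕ → ℕ} (hρ : asubst A (renSubst ρ) = asubst B (renSubst ρ)) (v : ℕ) :
    ∃ y, θ v = var y := by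
  obtain ⟨δ, hδ⟩ := hθ.2 _ hρ
  exact exists_eq_var_of_subst_eq_var (y := ρ v) (hδ v).symm

theorem GroundRef.singleton_of_fact {P : LPProgram L} {c : LPClause L} {σ : ℕ → L.Term ℕ}
    (hc : c ∈ P) (hfact : c.body = []) (hσ : ∀ v, (σ v).varFinset = ∅) :
    GroundRef P [asubst c.head σ] := by
  have hground : gGround [asubst c.head σ] := by
    simpa [gGround] using avars_asubst_eq_empty hσ c.head
  refine GroundRef.step (G₁ := []) (G₂ := []) hc (by rw [hfact]; exact hground) hground ?_
  simpa [hfact, gsubst] using GroundRef.nil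

theorem SLD.eq_var_of_nil {P : LPProgram L} {θ : ℕ → L.Term ℕ} (h : SLD P [] θ) :
    θ = var := by
  generalize hG : ([] : LPGoal L) = G at h
  cases h with
  | nil => rfl
  | step => simp at hG

theorem sld_singleton_iff_of_facts {P : LPProgram L} (hP : ∀ c ∈ P, c.body = [])
    {A : LPAtom L} {θ : ℕ → L.Term ℕ} :
    SLD P [A] θ ↔
      ∃ c ∈ P, ∃ ρ, RenamesApart ρ c [A] ∧ IsMguAtom A (asubst c.head (renSubst ρ)) θ := by
  constructor
  · intro h
    generalize hG : [A] = G at h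
    cases h with
    | nil => simp at hG
    | @step G₁ G₂ A' c ρ θ₀ θ' hc hρ hmgu hrest =>
      obtain ⟨rfl, rfl, rfl⟩ : G₁ = [] ∧ A' = A ∧ G₂ = [] := by
        simpa [List.singleton_eq_append_iff] using hG
      have hθ' : θ' = var := SLD.eq_var_of_nil (by simpa [hP c hc, gsubst] using hrest)
      subst hθ'
      simp only [subst_var_eq_self]
      exact ⟨c, hc, ρ, hρ, hmgu⟩
  · rintro ⟨c, hc, ρ, hρ, hmgu⟩
    have h := SLD.step (G₁ := []) (G₂ := []) (θ' := var) hc hρ hmgu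
      (by simpa [hP c hc, gsubst] using SLD.nil)
    simpa only [subst_var_eq_self, List.nil_append] using h

theorem sld_unary_fact {P : LPProgram L} (hP : ∀ c ∈ P, c.body = []) {R : L.Relations 1}
    {t : L.Term ℕ} (hc : ⟨⟨1, R, fun _ => t⟩, []⟩ ∈ P) {x : ℕ} {ρ : ℕ → ℕ}
    (hρ : RenamesApart ρ ⟨⟨1, R, fun _ => t⟩, []⟩ [⟨1, R, fun _ => var x⟩])
    (hx : x ∉ (t.subst (renSubst ρ)).varFinset) :
    SLD P [⟨1, R, fun _ => var x⟩] (Function.update var x (t.subst (renSubst ρ))) :=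
  (sld_singleton_iff_of_facts hP).2 ⟨_, hc, ρ, hρ, isMguAtom_unary_var hx⟩

theorem aT_subst (σ : ℕ → L13.Term ℕ) : aT.subst σ = aT := by
  simp only [aT, subst]
  congr 1
  funext i
  exact i.elim0

theorem P13_body_eq_nil : ∀ c ∈ P13, c.body = [] := by
  simp [P13]

theorem sld_P13_p_a : SLD P13 [pAtom (var 0)] (Function.update var 0 aT) := by
  have h := sld_unary_fact (R := true) (t := aT) (x := 0) (ρ := Nat.succ) P13_body_eq_nil
    (by simp [P13, pAtom])
    (renamesApart_succ (by simp [gvars, avars, varFinset])) (by simp [aT, varFinset])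
  rwa [aT_subst] at h

theorem sld_P13_p_var : SLD P13 [pAtom (var 0)] (Function.update var 0 (var 1)) :=
  sld_unary_fact (t := var 0) (ρ := Nat.succ) P13_body_eq_nil (by simp [P13, pAtom])
    (renamesApart_succ (by simp [gvars, avars, varFinset]))
    (by simp [subst, renSubst, varFinset])

theorem sld_P13_q_var : SLD P13 [qAtom (var 0)] (Function.update var 0 (var 1)) :=
  sld_unary_fact (t := var 0) (ρ := Nat.succ) P13_body_eq_nil (by simp [P13, qAtom])
    (renamesApart_succ (by simp [gvars, avars, varFinset]))
    (by simp [subst, renSubst, varFinset])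

theorem sld_P13_q_eq_var {θ : ℕ → L13.Term ℕ} (h : SLD P13 [qAtom (var 0)] θ) :
    ∃ y, θ 0 = var y := by
  obtain ⟨c, hc, ρ, -, hθ⟩ := (sld_singleton_iff_of_facts P13_body_eq_nil).1 h
  simp only [P13, List.mem_cons, List.not_mem_nil, or_false] at hc
  rcases hc with rfl | rfl | rfl
  · exact absurd (LPAtom.mk_unary_inj.1 hθ.1).1 Bool.false_ne_true
  · exact absurd (LPAtom.mk_unary_inj.1 hθ.1).1 Bool.false_ne_true
  · exact hθ.exists_eq_var (ρ := fun _ => 0) rfl 0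

/-- For the program `P13 = {p(x)., p(a)., q(x).}`:
(i) every ground instance of the goal `p(x)` has a ground refutation, and so
does every ground instance of `q(x)` (in particular they have the same ground
refutable instances); but
(ii) `p(x)` has a computed answer substitution mapping `x` to `a` as well as
one mapping `x` to a variable (i.e. `ε` up to renaming), while every computed
answer substitution of `q(x)` maps `x` to a variable, so the two sets of
computed answer substitutions differ.  Hence equivalence by computed answer
substitutions is strictly finer than equivalence by ground refutations. -/
theorem ground_equiv_not_computed_equiv :
    (∀ σ : ℕ → L13.Term ℕ, (∀ v, (σ v).varFinset = ∅) →
      (GroundRef P13 (gsubst [pAtom (Term.var 0)] σ) ∧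
       GroundRef P13 (gsubst [qAtom (Term.var 0)] σ))) ∧
    (∃ θ, SLD P13 [pAtom (Term.var 0)] θ ∧ θ 0 = aT) ∧
    (∃ θ, SLD P13 [pAtom (Term.var 0)] θ ∧ ∃ y : ℕ, θ 0 = Term.var y) ∧
    (∃ θ, SLD P13 [qAtom (Term.var 0)] θ ∧ ∃ y : ℕ, θ 0 = Term.var y) ∧
    (∀ θ, SLD P13 [qAtom (Term.var 0)] θ → ∃ y : ℕ, θ 0 = Term.var y) ∧
    {t : L13.Term ℕ | ∃ θ, SLD P13 [pAtom (Term.var 0)] θ ∧ θ 0 = t} ≠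
      {t : L13.Term ℕ | ∃ θ, SLD P13 [qAtom (Term.var 0)] θ ∧ θ 0 = t} := by
  have hpa : ∃ θ, SLD P13 [pAtom (var 0)] θ ∧ θ 0 = aT := ⟨_, sld_P13_p_a, by simp⟩
  refine ⟨fun σ hσ => ⟨?_, ?_⟩, hpa, ⟨_, sld_P13_p_var, 1, by simp⟩,
    ⟨_, sld_P13_q_var, 1, by simp⟩, fun θ => sld_P13_q_eq_var, fun hsets => ?_⟩
  · exact GroundRef.singleton_of_fact (c := ⟨pAtom (var 0), []⟩) (by simp [P13]) rfl hσ
  · exact GroundRef.singleton_of_fact (c := ⟨qAtom (var 0), []⟩) (by simp [P13]) rfl hσ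
  · obtain ⟨θ, hθ, hθa⟩ : aT ∈ {t | ∃ θ, SLD P13 [qAtom (var 0)] θ ∧ θ 0 = t} := hsets ▸ hpa
    obtain ⟨y, hy⟩ := sld_P13_q_eq_var hθ
    cases hθa.symm.trans hy
end
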